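/- For a bounded Vilenkin group and 1/2 < p ≤ 1, the maximal operator V^{(1)} is p-quasi-local on the complement of the double of the support square: for every p-atom a supported on I_N × I_N (i.e., supp a ⊂ I_N × I_N, ‖a‖_∞ ≤ M_N^{2/p}, ∫ a dμ = 0), one has ∫_{(G_m∖I_N) × (G_m∖I_N)} (sup_n |V_n^{(1)}(x,y;a)|)^p dμ(x,y) ≤ c_p < ∞, with c_p independent of the atom a and of N. -/

import Mathlib

open Complex Finset

noncomputable section

/-- The generalized number system: `M 0 = 1`, `M (k+1) = m k * M k`. -/
def Mf (m : ℕ → ℕ) : ℕ → ℕ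
  | 0 => 1
  | k + 1 => m k * Mf m k

/-- The generalized Rademacher function `r_k(x) = exp(2πi x_k / m_k)`. -/
def rad (m : ℕ → ℕ) (k : ℕ) (x : ∀ j, ZMod (m j)) : ℂ :=
  Complex.exp (2 * Real.pi * Complex.I * (x k).val / (m k))

/-- The Vilenkin function `ψ_n(x) = ∏ k, r_k(x)^{n_k}` where `n_k = (n / M_k) % m_k`
is the k-th digit of `n` in the generalized number system. -/
def psi (m : ℕ → ℕ) (n : ℕ) (x : ∀ j, ZMod (m j)) : ℂ :=
  ∏ k ∈ Finset.range (n + 1), rad m k x ^ ((n / Mf m k) % m k)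

/-- Vilenkin Dirichlet kernel. -/
def Dker (m : ℕ → ℕ) (n : ℕ) (x : ∀ j, ZMod (m j)) : ℂ :=
  ∑ j ∈ Finset.range n, psi m j x

/-- One-dimensional Vilenkin Fejér kernel. -/
def Fejer (m : ℕ → ℕ) (n : ℕ) (x : ∀ j, ZMod (m j)) : ℂ :=
  (n : ℂ)⁻¹ * ∑ k ∈ Finset.range n, Dker m k x

/-- Two-dimensional Marcinkiewicz–Fejér kernel. -/
def MKer (m : ℕ → ℕ) (n : ℕ) (x y : ∀ j, ZMod (m j)) : ℂ :=
  (n : ℂ)⁻¹ * ∑ k ∈ Finset.range n, Dker m k x * Dker m k y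

/-- `e_s ∈ G_m`: the element whose s-th coordinate is 1 and all others are 0. -/
def evec (m : ℕ → ℕ) (s : ℕ) : ∀ j, ZMod (m j) :=
  fun j => if j = s then 1 else 0

/-- `r_{i,n}(x,y) = ∏_{l=i}^{n} ∑_{s=0}^{m_l-1} ψ_{M_l}(x+y)^s`. -/
def rr (m : ℕ → ℕ) (i n : ℕ) (x y : ∀ j, ZMod (m j)) : ℂ :=
  ∏ l ∈ Finset.Icc i n, ∑ s ∈ Finset.range (m l), psi m (Mf m l) (x + y) ^ s

open MeasureTheory ENNReal NNReal
open scoped Classical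

/-- Discrete measurable structure on `ZMod n`. -/
instance (n : ℕ) : MeasurableSpace (ZMod n) := ⊤

/-- The cylinder set `I_k(z) = {x : x_j = z_j for j < k}`. -/
def cyl (m : ℕ → ℕ) (k : ℕ) (z : ∀ j, ZMod (m j)) : Set (∀ j, ZMod (m j)) :=
  {x | ∀ j < k, x j = z j}

variable (m : ℕ → ℕ)

/-- First term of `V_n`. -/
def V1 (μ : Measure ((∀ j, ZMod (m j)) × (∀ j, ZMod (m j))))
    (n : ℕ) (f : (∀ j, ZMod (m j)) × (∀ j, ZMod (m j)) → ℂ) (x y : ∀ j, ZMod (m j)) : ℂ :=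
  ∑ q ∈ Finset.range n, ∑ k ∈ Finset.Icc q (n - 1), ∑ v ∈ Finset.Icc 1 (m q - 1),
    ((Mf m q : ℂ) * (Mf m k : ℂ) / (m k : ℂ)) *
      ∫ tu in (cyl m k (v • evec m q)) ×ˢ (cyl m k 0),
        f (x - tu.1, y - tu.2) *
          (if ∀ r ∈ Finset.Icc (k + 1) (n - 1), tu.1 r + tu.2 r = 0 then 1 else 0) ∂μ

/-!
Fix `x, y ∉ I_N`. In the `(q, k, v)` term of `V1 m μ n a x y` the integrand vanishes unless
`(t, u) ∈ I_N(x) × I_N(y)`. If `k ≥ N` the domain `I_k` would force `y ∈ I_N`. If `n ≤ N`, the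
constraint `t_r + u_r = 0` is constant on `I_N(x) × I_N(y)`, so the term is a multiple of
`∫ a dμ = 0` (`μ` is translation, hence reflection, invariant). Otherwise the term is at most
`‖a‖_∞ μ(I_N × I_N) ≤ M_N ^ (2/p - 2)`, and it vanishes unless `(x, y)` lies in an exceptional
set `E_{q,k}` made of at most `m_q m_k M_N / M_k` rectangles of level `N`.

So `sup_n |V1_n|` is dominated by `∑_{q ≤ k < N} B M_q M_k M_N ^ (2/p - 2) 1_{E_{q,k}}`. As `p ≤ 1`
the `p`-th power is subadditive, and integrating gives at most a constant times
`M_N ^ (1 - 2p) ∑_{k < N} M_k ^ (p - 1) ∑_{q ≤ k} M_q ^ p ≲ M_N ^ (1 - 2p) ∑_{k < N} M_k ^ (2p-1)`,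
which is `≲ 1`: both sums are geometric because `M_{k+1} ≥ 2 M_k` and `p, 2p - 1 > 0`.
-/

lemma ENNReal.rpow_finsetSum_le_finsetSum_rpow {ι : Type*} (s : Finset ι) (f : ι → ℝ≥0∞) {p : ℝ}
    (hp0 : 0 < p) (hp1 : p ≤ 1) : (∑ i ∈ s, f i) ^ p ≤ ∑ i ∈ s, f i ^ p := by
  induction s using Finset.cons_induction with
  | empty => simp [ENNReal.zero_rpow_of_pos hp0]
  | cons a s _ ih =>
    rw [sum_cons, sum_cons]
    exact (ENNReal.rpow_add_le_add_rpow _ _ hp0.le hp1).trans (by gcongr)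

lemma lintegral_rpow_sum_indicator_le {α ι : Type*} [MeasurableSpace α] (μ : Measure α)
    (s : Finset ι) {E : ι → Set α} (hE : ∀ i, MeasurableSet (E i)) (c : ι → ℝ≥0∞) {p : ℝ}
    (hp0 : 0 < p) (hp1 : p ≤ 1) :
    ∫⁻ z, (∑ i ∈ s, (E i).indicator (fun _ => c i) z) ^ p ∂μ ≤ ∑ i ∈ s, c i ^ p * μ (E i) := by
  have hind (i : ι) (z : α) : (E i).indicator (fun _ => c i) z ^ p =
      (E i).indicator (fun _ => c i ^ p) z := by
    by_cases hz : z ∈ E i <;> simp [hz, ENNReal.zero_rpow_of_pos hp0]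
  calc ∫⁻ z, (∑ i ∈ s, (E i).indicator (fun _ => c i) z) ^ p ∂μ
      ≤ ∫⁻ z, ∑ i ∈ s, (E i).indicator (fun _ => c i ^ p) z ∂μ := lintegral_mono fun z => by
        simpa only [hind] using ENNReal.rpow_finsetSum_le_finsetSum_rpow s
          (fun i => (E i).indicator (fun _ => c i) z) hp0 hp1
    _ = ∑ i ∈ s, c i ^ p * μ (E i) := by
        rw [lintegral_finsetSum _ fun i _ => measurable_const.indicator (hE i)]
        simp only [lintegral_indicator_const (hE _)]

lemma MeasureTheory.Measure.isNegInvariant_of_isAddLeftInvariant {G : Type*} [MeasurableSpace G]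
    [AddCommGroup G] [MeasurableAdd₂ G] [MeasurableNeg G] (μ : Measure G) [IsProbabilityMeasure μ]
    [μ.IsAddLeftInvariant] : μ.IsNegInvariant := by
  have : (μ.map Neg.neg).IsAddLeftInvariant :=
    isAddLeftInvariant_map (negAddMonoidHom : G →+ G).toAddHom measurable_neg neg_surjective
  have : IsProbabilityMeasure (μ.map Neg.neg) :=
    Measure.isProbabilityMeasure_map measurable_neg.aemeasurable
  refine ⟨?_⟩
  show μ.map Neg.neg = μ
  ext s -
  simpa using (measure_add_measure_eq (μ.map Neg.neg) μ Set.univ s (by simp) (by simp)).symm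

lemma enorm_natCast_mul_div_le (a b c : ℕ) : ‖((a : ℂ) * b / c)‖ₑ ≤ a * b := by
  rcases Nat.eq_zero_or_pos c with rfl | hc
  · simp
  rw [← ofReal_norm, norm_div, norm_mul]
  simp only [Complex.norm_natCast]
  rw [← ENNReal.ofReal_natCast, ← ENNReal.ofReal_natCast, ← ENNReal.ofReal_mul (by positivity)]
  exact ENNReal.ofReal_le_ofReal (div_le_self (by positivity) (by exact_mod_cast hc))

lemma sum_range_sum_Icc_le_sum_range_sum_range {N n : ℕ} (f : ℕ → ℕ → ℝ≥0∞)
    (hf : ∀ q k, N ≤ k → f q k = 0) :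
    ∑ q ∈ range n, ∑ k ∈ Icc q (n - 1), f q k ≤ ∑ k ∈ range N, ∑ q ∈ range (k + 1), f q k := by
  rw [sum_comm' (t' := range n) (s' := fun k => range (k + 1)) fun q k => by simp only [mem_range, mem_Icc]; omega]
  refine sum_le_sum_of_ne_zero fun k _ hk => mem_range.2 ?_
  by_contra! hNk
  exact hk (sum_eq_zero fun q _ => hf q k hNk)

-- Makes `G_m` a Borel space, hence a measurable additive group.
instance (n : ℕ) : Countable (ZMod n) := by
  cases n
  · exact inferInstanceAs (Countable ℤ)
  · exact inferInstanceAs (Countable (Fin _))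

section NumberSystem

lemma Mf_eq_prod_range (N : ℕ) : Mf m N = ∏ j ∈ range N, m j := by
  induction N with
  | zero => rfl
  | succ N ih => rw [Mf, ih, prod_range_succ, mul_comm]

lemma Mf_pos (hm : ∀ k, 0 < m k) (k : ℕ) : 0 < Mf m k := by
  rw [Mf_eq_prod_range]
  exact prod_pos fun j _ => hm j

lemma Mf_mul_prod_Ico {k N : ℕ} (h : k ≤ N) : Mf m k * ∏ j ∈ Ico k N, m j = Mf m N := by
  rw [Mf_eq_prod_range, Mf_eq_prod_range, prod_range_mul_prod_Ico _ h]

lemma two_pow_mul_Mf_le (hm : ∀ k, 2 ≤ m k) {i j : ℕ} (h : i ≤ j) :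
    2 ^ (j - i) * Mf m i ≤ Mf m j := by
  rw [← Mf_mul_prod_Ico m h, mul_comm]
  gcongr
  simpa using pow_card_le_prod (Ico i j) m 2 fun j _ => hm j

lemma rpow_Mf_le_mul_pow (hm : ∀ k, 2 ≤ m k) {s : ℝ} (hs : 0 ≤ s) {q k : ℕ} (h : q ≤ k) :
    (Mf m q : ℝ≥0∞) ^ s ≤ (Mf m k : ℝ≥0∞) ^ s * ((2 : ℝ≥0∞) ^ (-s)) ^ (k - q) := by
  have hcast : (2 : ℝ≥0∞) ^ (k - q) * Mf m q ≤ Mf m k := by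
    exact_mod_cast two_pow_mul_Mf_le m hm h
  have h2 : ((2 : ℝ≥0∞) ^ (-s)) ^ (k - q) * ((2 : ℝ≥0∞) ^ (k - q)) ^ s = 1 := by
    rw [← ENNReal.rpow_natCast, ← ENNReal.rpow_mul, ← ENNReal.rpow_natCast, ← ENNReal.rpow_mul,
      ← ENNReal.rpow_add _ _ two_ne_zero ENNReal.ofNat_ne_top]
    simp [mul_comm]
  calc (Mf m q : ℝ≥0∞) ^ s
      = ((2 : ℝ≥0∞) ^ (-s)) ^ (k - q) * ((2 : ℝ≥0∞) ^ (k - q) * Mf m q) ^ s := by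
        rw [ENNReal.mul_rpow_of_nonneg _ _ hs, ← mul_assoc, h2, one_mul]
    _ ≤ (Mf m k : ℝ≥0∞) ^ s * ((2 : ℝ≥0∞) ^ (-s)) ^ (k - q) := by
        rw [mul_comm]
        gcongr

lemma sum_range_succ_rpow_Mf_le (hm : ∀ k, 2 ≤ m k) {s : ℝ} (hs : 0 < s) (k : ℕ) :
    ∑ q ∈ range (k + 1), (Mf m q : ℝ≥0∞) ^ s ≤ (Mf m k : ℝ≥0∞) ^ s * (1 - 2 ^ (-s))⁻¹ := by
  calc ∑ q ∈ range (k + 1), (Mf m q : ℝ≥0∞) ^ s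
      ≤ ∑ q ∈ range (k + 1), (Mf m k : ℝ≥0∞) ^ s * ((2 : ℝ≥0∞) ^ (-s)) ^ (k - q) :=
        sum_le_sum fun q hq => rpow_Mf_le_mul_pow m hm hs.le (Nat.lt_succ_iff.mp (mem_range.mp hq))
    _ = (Mf m k : ℝ≥0∞) ^ s * ∑ j ∈ range (k + 1), ((2 : ℝ≥0∞) ^ (-s)) ^ j := by
        rw [← mul_sum, ← sum_range_reflect (fun j => ((2 : ℝ≥0∞) ^ (-s)) ^ j)]
        simp only [add_tsub_cancel_right]
    _ ≤ (Mf m k : ℝ≥0∞) ^ s * (1 - 2 ^ (-s))⁻¹ := by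
        rw [← ENNReal.tsum_geometric]
        gcongr
        exact ENNReal.sum_le_tsum _

end NumberSystem

section Cylinders

variable {m}

lemma measurableSet_cyl (k : ℕ) (z : ∀ j, ZMod (m j)) : MeasurableSet (cyl m k z) := by
  simp only [cyl, Set.ofPred_forall]
  exact .iInter fun j => .iInter fun _ =>
    (measurableSet_singleton (z j)).preimage (measurable_pi_apply j)

lemma sub_mem_cyl_zero_iff {N : ℕ} {x t : ∀ j, ZMod (m j)} :
    x - t ∈ cyl m N 0 ↔ t ∈ cyl m N x := by
  simp [cyl, sub_eq_zero, eq_comm]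

lemma mem_cyl_min_of_mem_cyl {k N : ℕ} {t x z : ∀ j, ZMod (m j)} (ht : t ∈ cyl m k z)
    (ht' : t ∈ cyl m N x) : x ∈ cyl m (min k N) z := fun j hj =>
  (ht' j (hj.trans_le (min_le_right k N))).symm.trans (ht j (hj.trans_le (min_le_left k N)))

lemma cyl_subset_cyl {k N : ℕ} {x z : ∀ j, ZMod (m j)} (h : k ≤ N) (hx : x ∈ cyl m k z) :
    cyl m N x ⊆ cyl m k z := fun _ ht j hj => (ht j (hj.trans_le h)).trans (hx j hj)

end Cylinders

section ExceptionalSet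

def exceptionalSet (N q k : ℕ) : Set ((∀ j, ZMod (m j)) × (∀ j, ZMod (m j))) :=
  {z | (∀ j < k, j ≠ q → z.1 j = 0) ∧ (∀ j < k, z.2 j = 0) ∧
    (∀ r, k < r → r < N → z.1 r + z.2 r = 0)}

/-- Centres of the level-`N` cylinders covering `exceptionalSet m N q k`: the free data are
`x_q`, `y_k` and `x_j` for `k ≤ j < N`; the rest of `x` vanishes below `k`, and `y_j = -x_j`
for `k < j < N`. -/
def exceptionalCentre (N q k : ℕ)
    (c : ZMod (m q) × ZMod (m k) × ∀ j : Ico k N, ZMod (m j)) :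
    (∀ j, ZMod (m j)) × (∀ j, ZMod (m j)) :=
  let x : ∀ j, ZMod (m j) := fun j =>
    if h : j ∈ Ico k N then c.2.2 ⟨j, h⟩ else (Pi.single q c.1 : ∀ j, ZMod (m j)) j
  (x, fun j => if k < j then -x j else (Pi.single k c.2.1 : ∀ j, ZMod (m j)) j)

variable {m}

lemma measurableSet_exceptionalSet (N q k : ℕ) : MeasurableSet (exceptionalSet m N q k) := by
  have h₁ (j : ℕ) : Measurable fun z : (∀ j, ZMod (m j)) × (∀ j, ZMod (m j)) => z.1 j :=
    (measurable_pi_apply j).comp measurable_fst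
  have h₂ (j : ℕ) : Measurable fun z : (∀ j, ZMod (m j)) × (∀ j, ZMod (m j)) => z.2 j :=
    (measurable_pi_apply j).comp measurable_snd
  simp only [exceptionalSet, Set.ofPred_and, Set.ofPred_forall]
  exact .inter (.iInter fun j => .iInter fun _ => .iInter fun _ =>
      (measurableSet_singleton 0).preimage (h₁ j))
    (.inter (.iInter fun j => .iInter fun _ => (measurableSet_singleton 0).preimage (h₂ j))
      (.iInter fun r => .iInter fun _ => .iInter fun _ =>
        (measurableSet_singleton 0).preimage ((measurable_pi_apply r).comp
          (measurable_fst.add measurable_snd))))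

lemma mem_exceptionalSet {N q k v : ℕ} {x y : ∀ j, ZMod (m j)} (hx : x ∈ cyl m k (v • evec m q))
    (hy : y ∈ cyl m k 0) (hxy : ∀ r, k < r → r < N → x r + y r = 0) :
    (x, y) ∈ exceptionalSet m N q k :=
  ⟨fun j hj hjq => by simp [hx j hj, evec, hjq], hy, hxy⟩

lemma notMem_exceptionalSet_of_le {N q k : ℕ} {x y : ∀ j, ZMod (m j)} (hk : N ≤ k)
    (hy : y ∉ cyl m N 0) : (x, y) ∉ exceptionalSet m N q k :=
  fun h => hy fun j hj => h.2.1 j (hj.trans_le hk)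

lemma exceptionalSet_subset_iUnion {N q k : ℕ} :
    exceptionalSet m N q k ⊆ ⋃ c, cyl m N (exceptionalCentre m N q k c).1 ×ˢ
      cyl m N (exceptionalCentre m N q k c).2 := by
  rintro ⟨x, y⟩ ⟨hx, hy, hxy⟩
  dsimp only at hx hy hxy
  refine Set.mem_iUnion.2 ⟨(x q, y k, fun j => x j), fun j hj => ?_, fun j hj => ?_⟩
  · by_cases hjk : k ≤ j
    · simp [exceptionalCentre, hjk, hj]
    · by_cases hjq : j = q
      · subst hjq; simp [exceptionalCentre, hjk]
      · simp [exceptionalCentre, hjk, hjq, hx j (by omega) hjq]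
  · rcases lt_trichotomy k j with hkj | rfl | hjk
    · simp [exceptionalCentre, hkj, hkj.le, hj, eq_neg_of_add_eq_zero_right (hxy j hkj hj)]
    · simp [exceptionalCentre]
    · simp [exceptionalCentre, hjk.not_gt, hjk.ne, hy j hjk]

lemma measure_exceptionalSet_le {N : ℕ} [∀ j, NeZero (m j)]
    (μ : Measure ((∀ j, ZMod (m j)) × (∀ j, ZMod (m j))))
    (hcyl : ∀ z w : ∀ j, ZMod (m j), μ (cyl m N z ×ˢ cyl m N w) = ((Mf m N : ℝ≥0∞) * Mf m N)⁻¹)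
    {q k : ℕ} (hk : k ≤ N) :
    μ (exceptionalSet m N q k) ≤ m q * m k / (Mf m k * Mf m N) := by
  have hMf (j : ℕ) : Mf m j ≠ 0 := (Mf_pos m (fun i => Nat.pos_of_neZero (m i)) j).ne'
  have hcard : Fintype.card (ZMod (m q) × ZMod (m k) × ∀ j : Ico k N, ZMod (m j)) * Mf m k =
      m q * m k * Mf m N := by
    simp only [Fintype.card_prod, ZMod.card, Fintype.card_pi, prod_coe_sort (Ico k N) m,
      ← Mf_mul_prod_Ico m hk]
    ring
  calc μ (exceptionalSet m N q k)
      ≤ ∑ c, μ (cyl m N (exceptionalCentre m N q k c).1 ×ˢ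
          cyl m N (exceptionalCentre m N q k c).2) :=
        (measure_mono exceptionalSet_subset_iUnion).trans (measure_iUnion_fintype_le _ _)
    _ = Fintype.card (ZMod (m q) × ZMod (m k) × ∀ j : Ico k N, ZMod (m j)) *
          ((Mf m N : ℝ≥0∞) * Mf m N)⁻¹ := by
        simp [hcyl]
    _ = (Mf m k * Fintype.card (ZMod (m q) × ZMod (m k) × ∀ j : Ico k N, ZMod (m j))) /
          (Mf m k * (Mf m N * Mf m N)) := by
        rw [ENNReal.mul_div_mul_left _ _ (by simpa using hMf k) (by simp), div_eq_mul_inv]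
    _ = m q * m k * Mf m N / (Mf m k * Mf m N * Mf m N) := by
        rw [mul_comm (Mf m k : ℝ≥0∞), mul_assoc (Mf m k : ℝ≥0∞)]
        exact_mod_cast congrArg (fun n : ℕ => (n : ℝ≥0∞) / _) hcard
    _ = m q * m k / (Mf m k * Mf m N) :=
        ENNReal.mul_div_mul_right _ _ (by simpa using hMf N) (by simp)

end ExceptionalSet

section V1Term

def V1Term (μ : Measure ((∀ j, ZMod (m j)) × (∀ j, ZMod (m j)))) (n q k v : ℕ)
    (f : (∀ j, ZMod (m j)) × (∀ j, ZMod (m j)) → ℂ) (x y : ∀ j, ZMod (m j)) : ℂ :=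
  ∫ tu in (cyl m k (v • evec m q)) ×ˢ (cyl m k 0),
    f (x - tu.1, y - tu.2) *
      (if ∀ r ∈ Finset.Icc (k + 1) (n - 1), tu.1 r + tu.2 r = 0 then 1 else 0) ∂μ

lemma V1_eq_sum_V1Term (μ : Measure ((∀ j, ZMod (m j)) × (∀ j, ZMod (m j)))) (n : ℕ)
    (f : (∀ j, ZMod (m j)) × (∀ j, ZMod (m j)) → ℂ) (x y : ∀ j, ZMod (m j)) :
    V1 m μ n f x y = ∑ q ∈ range n, ∑ k ∈ Icc q (n - 1), ∑ v ∈ Icc 1 (m q - 1),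
      ((Mf m q : ℂ) * (Mf m k : ℂ) / (m k : ℂ)) * V1Term m μ n q k v f x y :=
  rfl

variable {m} {μ : Measure ((∀ j, ZMod (m j)) × (∀ j, ZMod (m j)))} {N n q k v : ℕ}
  {a : (∀ j, ZMod (m j)) × (∀ j, ZMod (m j)) → ℂ} {x y : ∀ j, ZMod (m j)}

lemma mem_cyl_of_apply_sub_ne_zero (hsupp : Function.support a ⊆ cyl m N 0 ×ˢ cyl m N 0)
    {t u : ∀ j, ZMod (m j)} (h : a (x - t, y - u) ≠ 0) : t ∈ cyl m N x ∧ u ∈ cyl m N y := by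
  obtain ⟨hx, hy⟩ := hsupp h
  exact ⟨sub_mem_cyl_zero_iff.1 hx, sub_mem_cyl_zero_iff.1 hy⟩

lemma V1Term_eq_zero_of_notMem_cyl (hsupp : Function.support a ⊆ cyl m N 0 ×ˢ cyl m N 0)
    (h : ¬ (x ∈ cyl m (min k N) (v • evec m q) ∧ y ∈ cyl m (min k N) 0)) :
    V1Term m μ n q k v a x y = 0 := by
  refine setIntegral_eq_zero_of_forall_eq_zero fun tu htu => ?_
  by_cases ha : a (x - tu.1, y - tu.2) = 0
  · rw [ha, zero_mul]
  · obtain ⟨ht, hu⟩ := mem_cyl_of_apply_sub_ne_zero hsupp ha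
    exact absurd ⟨mem_cyl_min_of_mem_cyl htu.1 ht, mem_cyl_min_of_mem_cyl htu.2 hu⟩ h

lemma V1Term_eq_zero_of_add_ne_zero (hsupp : Function.support a ⊆ cyl m N 0 ×ˢ cyl m N 0) {r : ℕ}
    (hr : r ∈ Icc (k + 1) (n - 1)) (hrN : r < N) (hxy : x r + y r ≠ 0) :
    V1Term m μ n q k v a x y = 0 := by
  refine setIntegral_eq_zero_of_forall_eq_zero fun tu _ => ?_
  by_cases ha : a (x - tu.1, y - tu.2) = 0
  · rw [ha, zero_mul]
  · obtain ⟨ht, hu⟩ := mem_cyl_of_apply_sub_ne_zero hsupp ha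
    rw [if_neg fun h => hxy (by rw [← ht r hrN, ← hu r hrN]; exact h r hr), mul_zero]

/-- For `n ≤ N` the constraint in `V1Term` is constant on the support of the integrand, which is
a full level-`N` cylinder inside the domain of integration, so the term is a multiple of `∫ a`. -/
lemma V1Term_eq_zero_of_integral_eq_zero [μ.IsAddLeftInvariant] [μ.IsNegInvariant]
    (hsupp : Function.support a ⊆ cyl m N 0 ×ˢ cyl m N 0) (hzero : ∫ z, a z ∂μ = 0) (hk : k ≤ N)
    (hn : n - 1 < N) (hx : x ∈ cyl m k (v • evec m q)) (hy : y ∈ cyl m k 0) :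
    V1Term m μ n q k v a x y = 0 := by
  have hind : (cyl m k (v • evec m q) ×ˢ cyl m k 0).indicator
      (fun tu => a (x - tu.1, y - tu.2) *
        (if ∀ r ∈ Icc (k + 1) (n - 1), tu.1 r + tu.2 r = 0 then 1 else 0))
      = fun w => (if ∀ r ∈ Icc (k + 1) (n - 1), x r + y r = 0 then 1 else 0) * a ((x, y) - w) := by
    funext w
    by_cases ha : a (x - w.1, y - w.2) = 0
    · have ha' : a ((x, y) - w) = 0 := ha
      simp [Set.indicator_apply, ha, ha']
    · obtain ⟨ht, hu⟩ := mem_cyl_of_apply_sub_ne_zero hsupp ha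
      have hconstr : (∀ r ∈ Icc (k + 1) (n - 1), w.1 r + w.2 r = 0) ↔
          ∀ r ∈ Icc (k + 1) (n - 1), x r + y r = 0 :=
        forall₂_congr fun r hr => by
          rw [mem_Icc] at hr
          rw [ht r (by omega), hu r (by omega)]
      have hw : w ∈ cyl m k (v • evec m q) ×ˢ cyl m k 0 :=
        ⟨cyl_subset_cyl hk hx ht, cyl_subset_cyl hk hy hu⟩
      rw [Set.indicator_of_mem hw, mul_comm]
      by_cases hc : ∀ r ∈ Icc (k + 1) (n - 1), x r + y r = 0
      · rw [if_pos hc, if_pos (hconstr.2 hc)]; rfl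
      · rw [if_neg hc, if_neg (mt hconstr.1 hc)]; rfl
  rw [V1Term, ← integral_indicator ((measurableSet_cyl _ _).prod (measurableSet_cyl _ _)), hind,
    integral_const_mul, integral_sub_left_eq_self, hzero, mul_zero]

lemma V1Term_eq_zero_of_notMem_exceptionalSet [μ.IsAddLeftInvariant] [μ.IsNegInvariant]
    (hsupp : Function.support a ⊆ cyl m N 0 ×ˢ cyl m N 0) (hzero : ∫ z, a z ∂μ = 0)
    (hy : y ∉ cyl m N 0) (hxy : (x, y) ∉ exceptionalSet m N q k) :
    V1Term m μ n q k v a x y = 0 := by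
  by_cases hcyl : x ∈ cyl m (min k N) (v • evec m q) ∧ y ∈ cyl m (min k N) 0
  swap
  · exact V1Term_eq_zero_of_notMem_cyl hsupp hcyl
  obtain ⟨hxk, hyk⟩ := hcyl
  have hk : k < N := by
    by_contra! hk
    exact hy (min_eq_right hk ▸ hyk)
  rw [min_eq_left hk.le] at hxk hyk
  by_cases hn : n - 1 < N
  · exact V1Term_eq_zero_of_integral_eq_zero hsupp hzero hk.le hn hxk hyk
  · have : ∃ r, k < r ∧ r < N ∧ x r + y r ≠ 0 := by
      by_contra! h
      exact hxy (mem_exceptionalSet hxk hyk h)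
    obtain ⟨r, hkr, hrN, hr⟩ := this
    exact V1Term_eq_zero_of_add_ne_zero hsupp (mem_Icc.2 ⟨hkr, by omega⟩) hrN hr

lemma enorm_V1Term_le (hsupp : Function.support a ⊆ cyl m N 0 ×ˢ cyl m N 0) {C : ℝ≥0∞}
    (hbd : ∀ z, ‖a z‖ₑ ≤ C) : ‖V1Term m μ n q k v a x y‖ₑ ≤ C * μ (cyl m N x ×ˢ cyl m N y) := by
  have hP := (measurableSet_cyl (m := m) N x).prod (measurableSet_cyl N y)
  refine (enorm_integral_le_lintegral_enorm _).trans ?_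
  rw [← lintegral_indicator_const hP]
  refine (setLIntegral_le_lintegral _ _).trans (lintegral_mono fun tu => ?_)
  by_cases ha : a (x - tu.1, y - tu.2) = 0
  · simp [ha]
  · have htu : tu ∈ cyl m N x ×ˢ cyl m N y := mem_cyl_of_apply_sub_ne_zero hsupp ha
    rw [Set.indicator_of_mem htu, enorm_mul, ← mul_one C]
    gcongr
    · exact hbd _
    · split_ifs <;> simp

lemma enorm_V1Term_le_indicator [μ.IsAddLeftInvariant] [μ.IsNegInvariant]
    (hsupp : Function.support a ⊆ cyl m N 0 ×ˢ cyl m N 0) (hzero : ∫ z, a z ∂μ = 0) {C : ℝ≥0∞}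
    (hbd : ∀ z, ‖a z‖ₑ ≤ C) (hy : y ∉ cyl m N 0) :
    ‖V1Term m μ n q k v a x y‖ₑ ≤
      (exceptionalSet m N q k).indicator (fun _ => C * μ (cyl m N x ×ˢ cyl m N y)) (x, y) := by
  by_cases hxy : (x, y) ∈ exceptionalSet m N q k
  · rw [Set.indicator_of_mem hxy]
    exact enorm_V1Term_le hsupp hbd
  · rw [V1Term_eq_zero_of_notMem_exceptionalSet hsupp hzero hy hxy]
    simp

lemma enorm_V1_le [μ.IsAddLeftInvariant] [μ.IsNegInvariant] {B : ℕ} (hB : ∀ k, m k ≤ B)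
    (hsupp : Function.support a ⊆ cyl m N 0 ×ˢ cyl m N 0) (hzero : ∫ z, a z ∂μ = 0) {C : ℝ≥0∞}
    (hbd : ∀ z, ‖a z‖ₑ ≤ C) (hy : y ∉ cyl m N 0) :
    ‖V1 m μ n a x y‖ₑ ≤ ∑ k ∈ range N, ∑ q ∈ range (k + 1), (exceptionalSet m N q k).indicator
      (fun _ => B * Mf m q * Mf m k * (C * μ (cyl m N x ×ˢ cyl m N y))) (x, y) := by
  set g : ℕ → ℕ → ℝ≥0∞ := fun q k => (exceptionalSet m N q k).indicator
    (fun _ => B * Mf m q * Mf m k * (C * μ (cyl m N x ×ˢ cyl m N y))) (x, y)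
  have hterm (q k v : ℕ) : ‖((Mf m q : ℂ) * Mf m k / m k) * V1Term m μ n q k v a x y‖ₑ ≤
      Mf m q * Mf m k * (exceptionalSet m N q k).indicator
        (fun _ => C * μ (cyl m N x ×ˢ cyl m N y)) (x, y) := by
    rw [enorm_mul]
    exact mul_le_mul' (enorm_natCast_mul_div_le _ _ _)
      (enorm_V1Term_le_indicator hsupp hzero hbd hy)
  have hsum (q k : ℕ) : ∑ v ∈ Icc 1 (m q - 1),
      ‖((Mf m q : ℂ) * Mf m k / m k) * V1Term m μ n q k v a x y‖ₑ ≤ g q k := by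
    refine (sum_le_sum fun v _ => hterm q k v).trans ?_
    rw [sum_const, nsmul_eq_mul, Nat.card_Icc]
    simp only [g, ← Set.indicator_const_mul]
    refine Set.indicator_le_indicator ?_
    simp only [mul_assoc]
    refine mul_le_mul_left ?_ _
    exact_mod_cast (by have := hB q; omega : m q - 1 + 1 - 1 ≤ B)
  rw [V1_eq_sum_V1Term]
  calc ‖∑ q ∈ range n, ∑ k ∈ Icc q (n - 1), ∑ v ∈ Icc 1 (m q - 1),
        ((Mf m q : ℂ) * Mf m k / m k) * V1Term m μ n q k v a x y‖ₑ
      ≤ ∑ q ∈ range n, ∑ k ∈ Icc q (n - 1), ∑ v ∈ Icc 1 (m q - 1),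
        ‖((Mf m q : ℂ) * Mf m k / m k) * V1Term m μ n q k v a x y‖ₑ :=
        (enorm_sum_le _ _).trans <| sum_le_sum fun q _ => (enorm_sum_le _ _).trans <|
          sum_le_sum fun k _ => enorm_sum_le _ _
    _ ≤ ∑ q ∈ range n, ∑ k ∈ Icc q (n - 1), g q k :=
        sum_le_sum fun q _ => sum_le_sum fun k _ => hsum q k
    _ ≤ ∑ k ∈ range N, ∑ q ∈ range (k + 1), g q k :=
        sum_range_sum_Icc_le_sum_range_sum_range g fun q k hk =>
          Set.indicator_of_notMem (notMem_exceptionalSet_of_le hk hy) _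

lemma setLIntegral_iSup_enorm_V1_rpow_le [μ.IsAddLeftInvariant] [μ.IsNegInvariant] {B : ℕ}
    (hB : ∀ k, m k ≤ B) (hsupp : Function.support a ⊆ cyl m N 0 ×ˢ cyl m N 0)
    (hzero : ∫ z, a z ∂μ = 0) {C D : ℝ≥0∞} (hbd : ∀ z, ‖a z‖ₑ ≤ C)
    (hcyl : ∀ z w : ∀ j, ZMod (m j), μ (cyl m N z ×ˢ cyl m N w) = D) {p : ℝ} (hp0 : 0 < p)
    (hp1 : p ≤ 1) :
    ∫⁻ z in (cyl m N 0)ᶜ ×ˢ (cyl m N 0)ᶜ, (⨆ n, ‖V1 m μ n a z.1 z.2‖ₑ) ^ p ∂μ ≤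
      ∑ k ∈ range N, ∑ q ∈ range (k + 1),
        (B * Mf m q * Mf m k * (C * D)) ^ p * μ (exceptionalSet m N q k) := by
  have hR : MeasurableSet ((cyl m N 0)ᶜ ×ˢ (cyl m N 0)ᶜ) :=
    (measurableSet_cyl N 0).compl.prod (measurableSet_cyl N 0).compl
  calc _ ≤ ∫⁻ z, (∑ k ∈ range N, ∑ q ∈ range (k + 1), (exceptionalSet m N q k).indicator
          (fun _ => B * Mf m q * Mf m k * (C * D)) z) ^ p ∂μ := by
        refine (setLIntegral_mono' hR fun z hz => ?_).trans (setLIntegral_le_lintegral _ _)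
        gcongr
        exact iSup_le fun n => hcyl z.1 z.2 ▸ enorm_V1_le hB hsupp hzero hbd hz.2
    _ ≤ _ := by
        simpa only [sum_sigma'] using lintegral_rpow_sum_indicator_le μ
          ((range N).sigma fun k => range (k + 1)) (fun i => measurableSet_exceptionalSet N i.2 i.1)
          (fun i => B * Mf m i.2 * Mf m i.1 * (C * D)) hp0 hp1

end V1Term

/-- The `(q, k)` term of the final sum: the coefficient `B M_q M_k ‖a‖_∞ μ(I_N × I_N)` of
`1_{E_{q,k}}` with `‖a‖_∞ = X ^ (2/p)`, `X = M_N`, against `μ E_{q,k} ≤ B² / (M_k X)`. -/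
lemma rpow_atomCoeff_mul_le {p : ℝ} (hp : 0 < p) {B Mq Mk X e : ℝ≥0∞} (hMk : Mk ≠ 0)
    (hMk' : Mk ≠ ⊤) (hX : X ≠ 0) (hX' : X ≠ ⊤) (he : e ≤ B * B / (Mk * X)) :
    (B * Mq * Mk * (X ^ (2 / p) * (X * X)⁻¹)) ^ p * e ≤
      B ^ p * B * B * X ^ (1 - 2 * p) * (Mq ^ p * Mk ^ p / Mk) := by
  have hXp : (X ^ (2 / p) * (X * X)⁻¹) ^ p * X⁻¹ = X ^ (1 - 2 * p) := by
    have hsq : (X * X)⁻¹ = X ^ (-2 : ℝ) := by rw [ENNReal.rpow_neg, ENNReal.rpow_two, sq]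
    rw [hsq, ← ENNReal.rpow_add _ _ hX hX', ← ENNReal.rpow_mul, ← ENNReal.rpow_neg_one,
      ← ENNReal.rpow_add _ _ hX hX']
    congr 1
    field_simp
    ring
  calc (B * Mq * Mk * (X ^ (2 / p) * (X * X)⁻¹)) ^ p * e
      ≤ (B * Mq * Mk * (X ^ (2 / p) * (X * X)⁻¹)) ^ p * (B * B / (Mk * X)) := by gcongr
    _ = B ^ p * B * B * ((X ^ (2 / p) * (X * X)⁻¹) ^ p * X⁻¹) * (Mq ^ p * Mk ^ p / Mk) := by
      simp only [ENNReal.mul_rpow_of_nonneg _ _ hp.le, div_eq_mul_inv,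
        ENNReal.mul_inv (Or.inl hMk) (Or.inl hMk')]
      ring
    _ = B ^ p * B * B * X ^ (1 - 2 * p) * (Mq ^ p * Mk ^ p / Mk) := by rw [hXp]

lemma sum_range_sum_range_rpow_Mf_le (hm : ∀ k, 2 ≤ m k) {p : ℝ} (hp : 1 / 2 < p) (N : ℕ) :
    ∑ k ∈ range N, ∑ q ∈ range (k + 1), (Mf m q : ℝ≥0∞) ^ p * (Mf m k : ℝ≥0∞) ^ p / Mf m k ≤
      (Mf m N : ℝ≥0∞) ^ (2 * p - 1) * ((1 - 2 ^ (-p))⁻¹ * (1 - 2 ^ (-(2 * p - 1)))⁻¹) := by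
  have hMf (k : ℕ) : (Mf m k : ℝ≥0∞) ≠ 0 := by
    exact_mod_cast (Mf_pos m (fun j => zero_lt_two.trans_le (hm j)) k).ne'
  have hsq (k : ℕ) : (Mf m k : ℝ≥0∞) ^ p * (Mf m k : ℝ≥0∞) ^ p / Mf m k =
      (Mf m k : ℝ≥0∞) ^ (2 * p - 1) := by
    rw [div_eq_mul_inv, ← ENNReal.rpow_neg_one, ← ENNReal.rpow_add _ _ (hMf k) (by simp),
      ← ENNReal.rpow_add _ _ (hMf k) (by simp)]
    ring_nf
  calc ∑ k ∈ range N, ∑ q ∈ range (k + 1), (Mf m q : ℝ≥0∞) ^ p * (Mf m k : ℝ≥0∞) ^ p / Mf m k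
      ≤ ∑ k ∈ range (N + 1), (Mf m k : ℝ≥0∞) ^ (2 * p - 1) * (1 - 2 ^ (-p))⁻¹ := by
        refine (sum_le_sum fun k _ => ?_).trans
          (sum_le_sum_of_subset (range_subset_range.2 N.le_succ))
        simp only [mul_div_assoc, ← sum_mul]
        calc (∑ q ∈ range (k + 1), (Mf m q : ℝ≥0∞) ^ p) * ((Mf m k : ℝ≥0∞) ^ p / Mf m k)
            ≤ (Mf m k : ℝ≥0∞) ^ p * (1 - 2 ^ (-p))⁻¹ * ((Mf m k : ℝ≥0∞) ^ p / Mf m k) := by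
              gcongr
              exact sum_range_succ_rpow_Mf_le m hm (by linarith) k
          _ = (Mf m k : ℝ≥0∞) ^ (2 * p - 1) * (1 - 2 ^ (-p))⁻¹ := by
              rw [← hsq, mul_div_assoc]
              ring
    _ ≤ (Mf m N : ℝ≥0∞) ^ (2 * p - 1) * ((1 - 2 ^ (-p))⁻¹ * (1 - 2 ^ (-(2 * p - 1)))⁻¹) := by
        rw [← sum_mul]
        calc (∑ k ∈ range (N + 1), (Mf m k : ℝ≥0∞) ^ (2 * p - 1)) * (1 - 2 ^ (-p))⁻¹
            ≤ (Mf m N : ℝ≥0∞) ^ (2 * p - 1) * (1 - 2 ^ (-(2 * p - 1)))⁻¹ * (1 - 2 ^ (-p))⁻¹ := by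
              gcongr
              exact sum_range_succ_rpow_Mf_le m hm (by linarith) N
          _ = _ := by ring

lemma ENNReal.inv_one_sub_two_rpow_neg_ne_top {s : ℝ} (hs : 0 < s) :
    (1 - (2 : ℝ≥0∞) ^ (-s))⁻¹ ≠ ⊤ :=
  ENNReal.inv_ne_top.2 (tsub_pos_iff_lt.2
    (ENNReal.rpow_lt_one_of_one_lt_of_neg one_lt_two (neg_neg_of_pos hs))).ne'

lemma sum_sum_rpow_mul_measure_exceptionalSet_le (hm : ∀ k, 2 ≤ m k) {B : ℕ} (hB : ∀ k, m k ≤ B)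
    {μ : Measure ((∀ j, ZMod (m j)) × (∀ j, ZMod (m j)))} {N : ℕ}
    (hcyl : ∀ z w : ∀ j, ZMod (m j), μ (cyl m N z ×ˢ cyl m N w) = ((Mf m N : ℝ≥0∞) * Mf m N)⁻¹)
    {p : ℝ} (hp : 1 / 2 < p) :
    ∑ k ∈ range N, ∑ q ∈ range (k + 1), (B * Mf m q * Mf m k *
      ((Mf m N : ℝ≥0∞) ^ (2 / p) * ((Mf m N : ℝ≥0∞) * Mf m N)⁻¹)) ^ p * μ (exceptionalSet m N q k)
      ≤ B ^ p * B * B * ((1 - 2 ^ (-p))⁻¹ * (1 - 2 ^ (-(2 * p - 1)))⁻¹) := by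
  have : ∀ j, NeZero (m j) := fun j => ⟨by have := hm j; omega⟩
  have hMf (k : ℕ) : (Mf m k : ℝ≥0∞) ≠ 0 := by
    exact_mod_cast (Mf_pos m (fun j => zero_lt_two.trans_le (hm j)) k).ne'
  calc _ ≤ ∑ k ∈ range N, ∑ q ∈ range (k + 1), B ^ p * B * B * (Mf m N : ℝ≥0∞) ^ (1 - 2 * p) *
          ((Mf m q : ℝ≥0∞) ^ p * (Mf m k : ℝ≥0∞) ^ p / Mf m k) := by
        refine sum_le_sum fun k hk => sum_le_sum fun q _ => ?_
        refine rpow_atomCoeff_mul_le (by linarith) (hMf k) (by simp) (hMf N) (by simp) ?_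
        refine (measure_exceptionalSet_le μ hcyl (mem_range.1 hk).le).trans ?_
        gcongr <;> exact_mod_cast hB _
    _ ≤ B ^ p * B * B * (Mf m N : ℝ≥0∞) ^ (1 - 2 * p) * ((Mf m N : ℝ≥0∞) ^ (2 * p - 1) *
          ((1 - 2 ^ (-p))⁻¹ * (1 - 2 ^ (-(2 * p - 1)))⁻¹)) := by
        simp only [← mul_sum]
        gcongr
        exact sum_range_sum_range_rpow_Mf_le m hm hp N
    _ = B ^ p * B * B * ((1 - 2 ^ (-p))⁻¹ * (1 - 2 ^ (-(2 * p - 1)))⁻¹) := by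
        rw [mul_assoc _ ((Mf m N : ℝ≥0∞) ^ (1 - 2 * p)), ← mul_assoc ((Mf m N : ℝ≥0∞) ^ _),
          ← ENNReal.rpow_add _ _ (hMf N) (by simp)]
        simp

/-- The maximal operator `V^{(1)}` is p-quasi-local for `1/2 < p ≤ 1`:
for every p-atom `a` supported on `I_N × I_N`, the p-th power of its maximal
function integrated outside `I_N × I_N` is bounded by a constant independent of
the atom and of `N`. -/
theorem stmt12 (hm : ∀ k, 2 ≤ m k) (B : ℕ) (hB : ∀ k, m k ≤ B)
    (μ : Measure ((∀ j, ZMod (m j)) × (∀ j, ZMod (m j)))) [IsProbabilityMeasure μ]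
    (hinv : ∀ (z : (∀ j, ZMod (m j)) × (∀ j, ZMod (m j)))
      (s : Set ((∀ j, ZMod (m j)) × (∀ j, ZMod (m j)))), μ ((fun w => z + w) ⁻¹' s) = μ s)
    (hcyl : ∀ (k : ℕ) (z w : ∀ j, ZMod (m j)),
      μ ((cyl m k z) ×ˢ (cyl m k w)) = ((Mf m k : ℝ≥0∞) * (Mf m k : ℝ≥0∞))⁻¹)
    (p : ℝ) (hp1 : 1 / 2 < p) (hp2 : p ≤ 1) :
    ∃ c : ℝ≥0∞, c < ⊤ ∧ ∀ (N : ℕ) (a : (∀ j, ZMod (m j)) × (∀ j, ZMod (m j)) → ℂ),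
      Measurable a →
      Function.support a ⊆ (cyl m N 0) ×ˢ (cyl m N 0) →
      (∀ z, ‖a z‖ ≤ (Mf m N : ℝ) ^ (2 / p)) →
      (∫ z, a z ∂μ) = 0 →
      ∫⁻ z in ((cyl m N 0)ᶜ ×ˢ (cyl m N 0)ᶜ),
        (⨆ n, (‖V1 m μ n a z.1 z.2‖₊ : ℝ≥0∞)) ^ p ∂μ ≤ c := by
  have : μ.IsAddLeftInvariant :=
    ⟨fun z => Measure.ext fun s hs => by rw [Measure.map_apply (measurable_const_add z) hs, hinv]⟩
  have := Measure.isNegInvariant_of_isAddLeftInvariant μ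
  refine ⟨B ^ p * B * B * ((1 - 2 ^ (-p))⁻¹ * (1 - 2 ^ (-(2 * p - 1)))⁻¹), ?_,
    fun N a _ hsupp hbd hzero => ?_⟩
  · have := ENNReal.inv_one_sub_two_rpow_neg_ne_top (s := p) (by linarith)
    have := ENNReal.inv_one_sub_two_rpow_neg_ne_top (s := 2 * p - 1) (by linarith)
    finiteness
  have hbd' (z : (∀ j, ZMod (m j)) × (∀ j, ZMod (m j))) :
      ‖a z‖ₑ ≤ (Mf m N : ℝ≥0∞) ^ (2 / p) := by
    rw [← ofReal_norm, ← ENNReal.ofReal_natCast,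
      ENNReal.ofReal_rpow_of_nonneg (by positivity) (by positivity)]
    exact ENNReal.ofReal_le_ofReal (hbd z)
  exact (setLIntegral_iSup_enorm_V1_rpow_le hB hsupp hzero hbd' (hcyl N) (by linarith) hp2).trans
    (sum_sum_rpow_mul_measure_exceptionalSet_le m hm hB (hcyl N) hp1)
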